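/- QU-resolution of clauses with a universal pivot is a derived rule of Q-resolution extended with the abstraction-based clause axiom: if C₁ ∪ {p} and C₂ ∪ {p̄} are clauses of the matrix ψ of PCNF φ = Π.ψ with p universal, p̄ ∉ C₁, p ∉ C₂, and C₁ ∪ C₂ non-tautological, then for the assignment A = {l̄ : l ∈ C₁ ∪ C₂}, the propositional CNF ψ[A] is unsatisfiable (it contains the complementary unit clauses (p) and (p̄)), so the resolvent C₁ ∪ C₂ = ⋁_{l∈A} l̄ is derivable by the abstraction-based clause axiom. -/
import Mathlib


/-- Variables are natural numbers. -/
abbrev Var := ℕ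

/-- A literal is a variable together with a polarity. -/
abbrev Lit := Var × Bool

/-- Negation of a literal. -/
def Lit.negate (l : Lit) : Lit := (l.1, !l.2)

/-- A clause is a finite set of literals (interpreted disjunctively). -/
abbrev Clause := Finset Lit

/-- A cube is a finite set of literals (interpreted conjunctively). -/
abbrev Cube := Finset Lit

/-- A CNF is a finite set of clauses. -/
abbrev Cnf := Finset Clause

/-- An assignment is a finite set of literals. -/
abbrev Assignment := Finset Lit

/-- An assignment contains no complementary pair of literals. -/
def Assignment.consistent (A : Assignment) : Prop := ∀ l ∈ A, Lit.negate l ∉ A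

/-- A total assignment satisfies a literal. -/
def litSat (σ : Var → Bool) (l : Lit) : Prop := σ l.1 = l.2

/-- A total assignment satisfies a clause. -/
def clauseSat (σ : Var → Bool) (C : Clause) : Prop := ∃ l ∈ C, litSat σ l

/-- A total assignment satisfies a CNF (is a propositional model). -/
def cnfSat (σ : Var → Bool) (ψ : Cnf) : Prop := ∀ C ∈ ψ, clauseSat σ C

/-- A total assignment satisfies a cube. -/
def cubeSat (σ : Var → Bool) (D : Cube) : Prop := ∀ l ∈ D, litSat σ l

/-- Restriction of a clause by an assignment: delete falsified literals. -/
def Clause.restrict (C : Clause) (A : Assignment) : Clause :=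
  C.filter (fun l => Lit.negate l ∉ A)

/-- Restriction ψ[A] of a CNF by an assignment: remove satisfied clauses and
delete falsified literals from the remaining clauses. -/
def Cnf.restrict (ψ : Cnf) (A : Assignment) : Cnf :=
  (ψ.filter (fun C => ∀ l ∈ A, l ∉ C)).image (fun C => Clause.restrict C A)

/-- Quantifiers. -/
inductive Quant | ex | all
deriving DecidableEq

/-- A quantifier prefix: a list of quantified variables (outermost first). -/
abbrev QPrefix := List (Quant × Var)

/-- Restriction of a prefix by an assignment: remove assigned variables. -/
def QPrefix.restrict (pre : QPrefix) (A : Assignment) : QPrefix :=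
  pre.filter (fun q => q.2 ∉ A.image Prod.fst)

/-- Satisfiability of the PCNF `pre.ψ`, defined recursively over the prefix:
an existential variable needs one satisfiable branch, a universal variable
both; a quantifier-free CNF is satisfiable iff it is propositionally true. -/
def qbfSat : QPrefix → Cnf → Prop
  | [], ψ => ∃ σ : Var → Bool, cnfSat σ ψ
  | (Quant.ex, x) :: pre, ψ =>
      qbfSat pre (Cnf.restrict ψ {(x, true)}) ∨ qbfSat pre (Cnf.restrict ψ {(x, false)})
  | (Quant.all, x) :: pre, ψ =>
      qbfSat pre (Cnf.restrict ψ {(x, true)}) ∧ qbfSat pre (Cnf.restrict ψ {(x, false)})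

/-- QU-resolution with a universal pivot is a derived rule of the
abstraction-based clause axiom: for the assignment `A = {¬l : l ∈ C₁ ∪ C₂}`,
the restricted CNF `ψ[A]` contains the complementary unit clauses `(p)` and
`(¬p)` and hence is propositionally unsatisfiable, so the resolvent
`C₁ ∪ C₂ = ⋁_{l ∈ A} ¬l` is derivable by the abstraction-based clause axiom. -/
theorem qu_resolution_via_abstraction
    (pre : QPrefix) (ψ : Cnf) (C1 C2 : Clause) (p : Lit)
    (h1 : insert p C1 ∈ ψ)
    (h2 : insert (Lit.negate p) C2 ∈ ψ)
    (huniv : (Quant.all, p.1) ∈ pre)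
    (hp1 : Lit.negate p ∉ C1) (hp1' : p ∉ C1)
    (hp2 : p ∉ C2) (hp2' : Lit.negate p ∉ C2)
    (hnontaut : ∀ m ∈ C1 ∪ C2, Lit.negate m ∉ C1 ∪ C2) :
    ({p} : Clause) ∈ Cnf.restrict ψ ((C1 ∪ C2).image Lit.negate) ∧
    ({Lit.negate p} : Clause) ∈ Cnf.restrict ψ ((C1 ∪ C2).image Lit.negate) ∧
    ¬ ∃ σ : Var → Bool, cnfSat σ (Cnf.restrict ψ ((C1 ∪ C2).image Lit.negate)) := by
  classical
  have hinv : ∀ l : Lit, Lit.negate (Lit.negate l) = l := by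
    intro l; simp [Lit.negate]
  set A : Assignment := (C1 ∪ C2).image Lit.negate with hA
  have hnegmem : ∀ l : Lit, Lit.negate l ∈ A ↔ l ∈ C1 ∪ C2 := by
    intro l
    constructor
    · intro h
      simp only [hA, Finset.mem_image] at h
      obtain ⟨m, hm, hml⟩ := h
      have : m = l := by
        have := congrArg Lit.negate hml
        rwa [hinv, hinv] at this
      exact this ▸ hm
    · intro h; exact Finset.mem_image_of_mem _ h
  have hpA : Lit.negate p ∉ A := by
    rw [hnegmem]
    simp [Finset.mem_union, hp1', hp2]
  have hnpA : Lit.negate (Lit.negate p) ∉ A := by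
    rw [hnegmem]
    simp [Finset.mem_union, hp1, hp2']
  -- clause C1' = insert p C1 not touched by A, restricts to {p}
  have key : ∀ (q : Lit) (C : Clause), q ∉ C → Lit.negate q ∉ C1 ∪ C2 →
      Lit.negate q ∉ A →
      C ⊆ C1 ∪ C2 → insert q C ∈ ψ →
      ({q} : Clause) ∈ Cnf.restrict ψ A := by
    intro q C hqC hnq hnqA hsub hmem
    have hfilt : ∀ l ∈ A, l ∉ insert q C := by
      intro l hl
      simp only [hA, Finset.mem_image] at hl
      obtain ⟨m, hm, rfl⟩ := hl
      simp only [Finset.mem_insert, not_or]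
      constructor
      · intro h
        apply hnq
        have hmq : m = Lit.negate q := by rw [← h, hinv]
        exact hmq ▸ hm
      · intro h; exact hnontaut m hm (hsub h)
    have hres : Clause.restrict (insert q C) A = {q} := by
      ext l
      simp only [Clause.restrict, Finset.mem_filter, Finset.mem_insert, Finset.mem_singleton]
      constructor
      · rintro ⟨h1 | h1, h2⟩
        · exact h1
        · exfalso; exact h2 (hnegmem l |>.mpr (hsub h1))
      · rintro rfl; exact ⟨Or.inl rfl, hnqA⟩
    refine Finset.mem_image.mpr ⟨insert q C, ?_, hres⟩
    exact Finset.mem_filter.mpr ⟨hmem, hfilt⟩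
  have h1' : ({p} : Clause) ∈ Cnf.restrict ψ A := by
    refine key p C1 hp1' ?_ hpA (Finset.subset_union_left) h1
    simp [Finset.mem_union, hp1, hp2']
  have h2' : ({Lit.negate p} : Clause) ∈ Cnf.restrict ψ A := by
    refine key (Lit.negate p) C2 hp2' ?_ hnpA (Finset.subset_union_right) h2
    rw [hinv]
    simp [Finset.mem_union, hp1', hp2]
  refine ⟨h1', h2', ?_⟩
  rintro ⟨σ, hσ⟩
  obtain ⟨l, hl, hsl⟩ := hσ _ h1'
  obtain ⟨l', hl', hsl'⟩ := hσ _ h2'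
  rw [Finset.mem_singleton] at hl hl'
  subst hl hl'
  simp only [litSat, Lit.negate] at hsl hsl'
  simp [hsl] at hsl'
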